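/- Suppose for each d ∈ 𝒟 and z, z' ∈ 𝒵 there are potential outcomes Y_{dz} with Y_{dz} = Y_{dz'} a.s. (so define Y_d = Y_{dz}), Z is jointly independent of all potential outcomes and potential treatments D_z, and 1{D_{z'} = d} ≤ 1{D_z = d} almost surely for a given triple (d, z, z'). Then for every Borel set B, ℙ(Y ∈ B, D = d | Z = z') ≤ ℙ(Y ∈ B, D = d | Z = z). -/

import Mathlib

/-!
On the event `{Z = w}` the observed event `{Y ∈ B, D = d}` coincides with the event
`{Y_d ∈ B, D_w = d}` written in potential outcomes and treatments. Since `Z` is independent of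
these, conditioning on `{Z = w}` does not change its probability, so
`ℙ(Y ∈ B, D = d | Z = w) = ℙ(Y_d ∈ B, D_w = d)`, and monotonicity of the events in `w = z', z`
gives the inequality.
-/

open MeasureTheory ProbabilityTheory

namespace ProbabilityTheory

variable {Ω ι β : Type*} {mΩ : MeasurableSpace Ω} {mι : MeasurableSpace ι}
  {mβ : MeasurableSpace β} {μ : Measure Ω}

theorem IndepFun.cond_preimage_apply_preimage [IsFiniteMeasure μ] {Z : Ω → ι} {X : Ω → β}
    (h : IndepFun Z X μ) (hZ : Measurable Z) {T : Set ι} {S : Set β}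
    (hT : MeasurableSet T) (hS : MeasurableSet S) (hpos : μ (Z ⁻¹' T) ≠ 0) :
    μ[|Z ⁻¹' T] (X ⁻¹' S) = μ (X ⁻¹' S) := by
  rw [cond_apply (hZ hT), h.measure_inter_preimage_eq_mul T S hT hS, ← mul_assoc,
    ENNReal.inv_mul_cancel hpos (measure_ne_top μ _), one_mul]

end ProbabilityTheory

theorem preimage_singleton_inter_observed_eq {Ω α ι γ : Type*} {Y : Ω → γ} {D : Ω → α}
    {Z : Ω → ι} {Yd : α → Ω → γ} {Dz : ι → Ω → α}
    (hexcl : ∀ ω, Y ω = Yd (D ω) ω) (hDz : ∀ ω, D ω = Dz (Z ω) ω)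
    (B : Set γ) (d : α) (w : ι) :
    Z ⁻¹' {w} ∩ {ω | Y ω ∈ B ∧ D ω = d} = Z ⁻¹' {w} ∩ {ω | Yd d ω ∈ B ∧ Dz w ω = d} := by
  ext ω
  simp only [Set.mem_inter_iff, Set.mem_preimage, Set.mem_singleton_iff, Set.mem_ofPred_eq]
  constructor
  · rintro ⟨rfl, hY, rfl⟩
    exact ⟨rfl, hexcl ω ▸ hY, (hDz ω).symm⟩
  · rintro ⟨rfl, hY, hD⟩
    have hDd : D ω = d := (hDz ω).trans hD
    exact ⟨rfl, by rwa [hexcl ω, hDd], hDd⟩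

theorem stmt3_general
    {Ω : Type*} [MeasurableSpace Ω] (μ : Measure Ω) [IsProbabilityMeasure μ]
    {α : Type*} [MeasurableSpace α] [MeasurableSingletonClass α]
    {ι : Type*} [MeasurableSpace ι] [MeasurableSingletonClass ι]
    (Y : Ω → ℝ) (D : Ω → α) (Z : Ω → ι)
    (Yd : α → Ω → ℝ) (Dz : ι → Ω → α)
    (hZmeas : Measurable Z)
    -- instrument exclusion: Y = Y_d on the event {D = d}
    (hexcl : ∀ ω, Y ω = Yd (D ω) ω)
    -- potential treatments: D = D_z on the event {Z = z}
    (hDz : ∀ ω, D ω = Dz (Z ω) ω)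
    -- random assignment: Z is jointly independent of all potential outcomes/treatments
    (hindep : IndepFun Z
      (fun ω => ((fun d : α => Yd d ω), (fun z : ι => Dz z ω))) μ)
    (d : α) (z z' : ι)
    (hposz : 0 < μ (Z ⁻¹' {z})) (hposz' : 0 < μ (Z ⁻¹' {z'}))
    -- unordered monotonicity for the triple (d, z, z'): 1{D_{z'} = d} ≤ 1{D_z = d} a.s.
    (hmono : ∀ᵐ ω ∂μ, Dz z' ω = d → Dz z ω = d)
    (B : Set ℝ) (hB : MeasurableSet B) :
    μ[|Z ⁻¹' {z'}] {ω | Y ω ∈ B ∧ D ω = d}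
      ≤ μ[|Z ⁻¹' {z}] {ω | Y ω ∈ B ∧ D ω = d} := by
  have hobserved : ∀ w, 0 < μ (Z ⁻¹' {w}) →
      μ[|Z ⁻¹' {w}] {ω | Y ω ∈ B ∧ D ω = d} = μ {ω | Yd d ω ∈ B ∧ Dz w ω = d} := by
    intro w hw
    have hZw := hZmeas (measurableSet_singleton w)
    have hproj : Measurable fun p : (α → ℝ) × (ι → α) => (p.1 d, p.2 w) :=
      ((measurable_pi_apply d).comp measurable_fst).prodMk
        ((measurable_pi_apply w).comp measurable_snd)
    rw [← cond_inter_self hZw, preimage_singleton_inter_observed_eq hexcl hDz,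
      cond_inter_self hZw]
    exact (hindep.comp measurable_id hproj).cond_preimage_apply_preimage hZmeas
      (measurableSet_singleton w) (hB.prod (measurableSet_singleton d)) hw.ne'
  rw [hobserved z' hposz', hobserved z hposz]
  exact measure_mono_ae (hmono.mono fun ω hmono hω => ⟨hω.1, hmono hω.2⟩)

/-- Testable implication of IV validity for an unordered treatment:
if `1{D_{z'} = d} ≤ 1{D_z = d}` almost surely for the triple `(d, z, z')`,
then `P(Y ∈ B, D = d | Z = z') ≤ P(Y ∈ B, D = d | Z = z)`. -/
theorem stmt3
    {Ω : Type*} [MeasurableSpace Ω] (μ : Measure Ω) [IsProbabilityMeasure μ]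
    {α : Type*} [Fintype α] [MeasurableSpace α] [MeasurableSingletonClass α]
    {ι : Type*} [MeasurableSpace ι] [MeasurableSingletonClass ι]
    (Y : Ω → ℝ) (D : Ω → α) (Z : Ω → ι)
    (Yd : α → Ω → ℝ) (Dz : ι → Ω → α)
    (hYmeas : Measurable Y) (hDmeas : Measurable D) (hZmeas : Measurable Z)
    (hYdmeas : ∀ d, Measurable (Yd d)) (hDzmeas : ∀ z, Measurable (Dz z))
    -- instrument exclusion: Y = Y_d on the event {D = d}
    (hexcl : ∀ ω, Y ω = Yd (D ω) ω)
    -- potential treatments: D = D_z on the event {Z = z}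
    (hDz : ∀ ω, D ω = Dz (Z ω) ω)
    -- random assignment: Z is jointly independent of all potential outcomes/treatments
    (hindep : IndepFun Z
      (fun ω => ((fun d : α => Yd d ω), (fun z : ι => Dz z ω))) μ)
    (d : α) (z z' : ι)
    (hposz : 0 < μ (Z ⁻¹' {z})) (hposz' : 0 < μ (Z ⁻¹' {z'}))
    -- unordered monotonicity for the triple (d, z, z'): 1{D_{z'} = d} ≤ 1{D_z = d} a.s.
    (hmono : ∀ᵐ ω ∂μ, Dz z' ω = d → Dz z ω = d)
    (B : Set ℝ) (hB : MeasurableSet B) :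
    μ[|Z ⁻¹' {z'}] {ω | Y ω ∈ B ∧ D ω = d}
      ≤ μ[|Z ⁻¹' {z}] {ω | Y ω ∈ B ∧ D ω = d} :=
  stmt3_general μ Y D Z Yd Dz hZmeas hexcl hDz hindep d z z' hposz hposz' hmono B hB
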